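/- arXiv:2306.11153 — 10 statements merged into one kernel-verified Lean document; each statement's English description precedes it below -/
import Mathlib

section
/- For every integer $t \ge 2$, the polynomial $g_{2^t-3} = \sum_{2b+3c=2^t-3} \binom{b+c}{b} w_2^b w_3^c \in \mathbb{Z}_2[w_2,w_3]$ is the zero polynomial, i.e., $\binom{b+c}{b} \equiv 0 \pmod 2$ for all nonnegative integers $b,c$ with $2b+3c = 2^t-3$. -/
open MvPolynomial Finset

/-- `g r = ∑_{2b+3c=r} C(b+c,b) w₂^b w₃^c` in `ℤ₂[w₂,w₃]` (variable `X 0` is `w₂`, `X 1` is `w₃`). -/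
noncomputable def g (r : ℕ) : MvPolynomial (Fin 2) (ZMod 2) :=
  ∑ b ∈ Finset.range (r + 1), ∑ c ∈ Finset.range (r + 1),
    if 2 * b + 3 * c = r then
      C ((Nat.choose (b + c) b : ZMod 2)) * (X 0) ^ b * (X 1) ^ c
    else 0

lemma key (t : ℕ) (ht2 : 2 ≤ t) : ∀ b c : ℕ,
    2 * b + 3 * c = 2 ^ t - 3 → Nat.choose (b + c) b % 2 = 0 := by
  induction t, ht2 using Nat.le_induction with
  | base => intro b c h; omega
  | succ t ht ih =>
    intro b c h
    have h2 : (4:ℕ) ≤ 2 ^ t := by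
      calc (4:ℕ) = 2^2 := rfl
      _ ≤ 2^t := Nat.pow_le_pow_right (by norm_num) ht
    have hp : 2 ^ (t+1) = 2 * 2 ^ t := by ring
    have hc : c % 2 = 1 := by omega
    have lucas := @Choose.choose_modEq_choose_mod_mul_choose_div_nat (b+c) b 2 ⟨Nat.prime_two⟩
    rw [Nat.ModEq] at lucas
    rcases Nat.even_or_odd b with hb | hb
    · have hb2 : b % 2 = 0 := Nat.even_iff.mp hb
      have h1 : (b+c) % 2 = 1 := by omega
      have h3 : (b+c)/2 = b/2 + c/2 := by omega
      have h4 : 2 * (b/2) + 3 * (c/2) = 2 ^ t - 3 := by omega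
      have := ih (b/2) (c/2) h4
      rw [h1, hb2, h3] at lucas
      simp only [Nat.choose] at lucas
      omega
    · have hb2 : b % 2 = 1 := Nat.odd_iff.mp hb
      have h1 : (b+c) % 2 = 0 := by omega
      rw [h1, hb2] at lucas
      simp at lucas
      omega

theorem g_two_pow_sub_three_eq_zero (t : ℕ) (ht : 2 ≤ t) :
    g (2 ^ t - 3) = 0 ∧
    ∀ b c : ℕ, 2 * b + 3 * c = 2 ^ t - 3 → Nat.choose (b + c) b % 2 = 0 := by
  refine ⟨?_, key t ht⟩
  unfold g
  apply Finset.sum_eq_zero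
  intro b _
  apply Finset.sum_eq_zero
  intro c _
  split_ifs with h
  · have := key t ht b c h
    have hz : ((Nat.choose (b + c) b : ZMod 2)) = 0 := by
      rw [ZMod.natCast_eq_zero_iff]
      omega
    rw [hz, map_zero, zero_mul, zero_mul]
  · rfl
end

section
/- For integers $t \ge 3$ and $0 \le i \le t-1$, every monomial $w_2^b w_3^c$ appearing with odd coefficient $\binom{b+c}{b}$ in $f_i = g_{2^t-3+2^i}$ (so $2b+3c = 2^t-3+2^i$) satisfies either $(b,c) = (2^{t-1}-2^i, 2^i-1)$ or $b < 2^{t-1}-2^i$ (equivalently $c > 2^i - 1$). Hence $w_2^{2^{t-1}-2^i}w_3^{2^i-1}$ is the leading monomial of $f_i$ in the lexicographic order with $w_2 > w_3$. -/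
open MvPolynomial Finset

theorem lucas2 (b c : ℕ) :
    Odd (Nat.choose (b + c) b) ↔
      ¬(Odd b ∧ Odd c) ∧ Odd (Nat.choose (b / 2 + c / 2) (b / 2)) := by
  haveI : Fact (Nat.Prime 2) := ⟨Nat.prime_two⟩
  have h := @Choose.choose_modEq_choose_mod_mul_choose_div_nat (b + c) b 2 _
  have key : Odd ((b + c).choose b) ↔
      Odd (Nat.choose ((b + c) % 2) (b % 2)) ∧ Odd (Nat.choose ((b + c) / 2) (b / 2)) := by
    rw [← Nat.odd_mul, Nat.odd_iff, Nat.odd_iff, h]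
  rw [key]
  rcases Nat.mod_two_eq_zero_or_one b with hb | hb <;>
    rcases Nat.mod_two_eq_zero_or_one c with hc | hc <;>
    rw [show (b + c) % 2 = (b % 2 + c % 2) % 2 from Nat.add_mod b c 2, hb, hc] <;>
    rw [show (b + c) / 2 = b / 2 + c / 2 + (b % 2 + c % 2) / 2 by omega] <;>
    simp [Nat.odd_iff, hb, hc, Nat.choose]

/-- Descent lemma: no carry-free pair `(c,d)` solves `3c + 2d + 3 = 2^(i+2)`. -/
theorem lemA : ∀ i c d : ℕ, Odd (Nat.choose (c + d) c) → 3 * c + 2 * d + 3 ≠ 2 ^ (i + 2) := by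
  intro i
  induction i with
  | zero => intro c d _ h; norm_num at h; omega
  | succ k ih =>
    intro c d hodd h
    obtain ⟨hnot, hrec⟩ := (lucas2 c d).mp hodd
    rw [Nat.odd_iff, Nat.odd_iff] at hnot
    have h2 : 2 ∣ 2 ^ (k + 1 + 2) := dvd_pow_self 2 (by omega)
    have hpow : 2 ^ (k + 1 + 2) = 2 * 2 ^ (k + 2) := by rw [pow_succ]; ring
    exact ih (c / 2) (d / 2) hrec (by omega)

/-- Splitting off the top bit of a carry-free sum. -/
theorem lemC : ∀ k b c m : ℕ, Odd (Nat.choose (b + c) b) → b + c = 2 ^ k + m →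
    m < 2 ^ k → c < 2 ^ k → ∃ d, m = c + d ∧ Odd (Nat.choose (c + d) c) := by
  intro k
  induction k with
  | zero =>
    intro b c m _ heq hm hc
    norm_num at hm hc
    subst hm; subst hc
    exact ⟨0, rfl, by decide⟩
  | succ k ih =>
    intro b c m hodd heq hm hc
    obtain ⟨hnot, hrec⟩ := (lucas2 b c).mp hodd
    rw [Nat.odd_iff, Nat.odd_iff] at hnot
    have hpow : 2 ^ (k + 1) = 2 * 2 ^ k := by rw [pow_succ]; ring
    obtain ⟨d', hd', hodd'⟩ := ih (b / 2) (c / 2) (m / 2) hrec (by omega) (by omega) (by omega)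
    have hcm : c % 2 = 1 → m % 2 = 1 := by omega
    refine ⟨2 * d' + m % 2 - c % 2, by omega, ?_⟩
    rw [lucas2]
    constructor
    · rw [Nat.odd_iff, Nat.odd_iff]; omega
    · rw [show (2 * d' + m % 2 - c % 2) / 2 = d' by omega]; exact hodd'

theorem leading_monomial_of_f_i (t i : ℕ) (ht : 3 ≤ t) (hi : i ≤ t - 1)
    (b c : ℕ) (h : 2 * b + 3 * c = 2 ^ t - 3 + 2 ^ i)
    (hodd : Odd (Nat.choose (b + c) b)) :
    (b = 2 ^ (t - 1) - 2 ^ i ∧ c = 2 ^ i - 1) ∨ b < 2 ^ (t - 1) - 2 ^ i := by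
  have hP : 2 ^ t = 2 * 2 ^ (t - 1) := by
    have ht1 : t - 1 + 1 = t := by omega
    have := pow_succ 2 (t - 1)
    rw [ht1] at this
    omega
  have hPi : 2 ^ i ≤ 2 ^ (t - 1) := Nat.pow_le_pow_right (by norm_num) hi
  have hP4 : 4 ≤ 2 ^ (t - 1) := by
    calc (4 : ℕ) = 2 ^ 2 := by norm_num
    _ ≤ 2 ^ (t - 1) := Nat.pow_le_pow_right (by norm_num) (by omega)
  rcases lt_or_ge b (2 ^ (t - 1) - 2 ^ i) with hb | hb
  · exact Or.inr hb
  left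
  rcases lt_or_ge (b + c) (2 ^ (t - 1)) with hn | hn
  · omega
  exfalso
  rcases lt_or_ge i 2 with hi2 | hi2
  · have : 2 ^ i ≤ 2 ^ 1 := Nat.pow_le_pow_right (by norm_num) (by omega)
    norm_num at this; omega
  have hm : b + c = 2 ^ (t - 1) + (b + c - 2 ^ (t - 1)) := by omega
  obtain ⟨d, hd, hodd'⟩ := lemC (t - 1) b c (b + c - 2 ^ (t - 1)) hodd hm (by omega) (by omega)
  have hpow : 2 ^ (i - 2 + 2) = 2 ^ i := by rw [show i - 2 + 2 = i by omega]
  exact lemA (i - 2) c d hodd' (by omega)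
end

section
/- For every integer $t \ge 3$, $g_{2^t-1} = \sum_{k=0}^{\lfloor (2^{t-1}-2)/3 \rfloor} \binom{2^{t-1}-1-k}{2k+1} w_2^{2^{t-1}-2-3k} w_3^{2k+1}$ in $\mathbb{Z}_2[w_2,w_3]$; that is, in every monomial of $g_{2^t-1}$ the exponent of $w_3$ is odd. -/
open MvPolynomial Finset

theorem g_two_pow_sub_one_explicit (t : ℕ) (ht : 3 ≤ t) :
    g (2 ^ t - 1) =
      ∑ k ∈ Finset.range ((2 ^ (t - 1) - 2) / 3 + 1),
        C ((Nat.choose (2 ^ (t - 1) - 1 - k) (2 * k + 1) : ZMod 2)) *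
          (X 0) ^ (2 ^ (t - 1) - 2 - 3 * k) * (X 1) ^ (2 * k + 1) := by
  set n := 2 ^ (t - 1) with hn
  have hn4 : 4 ≤ n := by
    have : 2 ^ 2 ≤ 2 ^ (t - 1) := Nat.pow_le_pow_right (by norm_num) (by omega)
    simpa [hn] using this
  have h2t : 2 ^ t = 2 * n := by
    rw [hn, ← pow_succ']
    congr 1
    omega
  rw [g, h2t, ← Finset.sum_product', ← Finset.sum_filter]
  refine Finset.sum_nbij' (fun p => p.2 / 2) (fun k => (n - 2 - 3 * k, 2 * k + 1))
    ?_ ?_ ?_ ?_ ?_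
  · rintro ⟨b, c⟩ hp
    simp only [Finset.mem_filter, Finset.mem_product, Finset.mem_range] at hp ⊢
    omega
  · intro k hk
    simp only [Finset.mem_filter, Finset.mem_product, Finset.mem_range] at hk ⊢
    omega
  · rintro ⟨b, c⟩ hp
    simp only [Finset.mem_filter, Finset.mem_product, Finset.mem_range] at hp
    have : n - 2 - 3 * (c / 2) = b ∧ 2 * (c / 2) + 1 = c := by omega
    simp [Prod.ext_iff, this.1, this.2]
  · intro k hk
    show (2 * k + 1) / 2 = k
    omega
  · rintro ⟨b, c⟩ hp
    simp only [Finset.mem_filter, Finset.mem_product, Finset.mem_range] at hp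
    obtain ⟨k, hc⟩ : ∃ k, c = 2 * k + 1 := ⟨c / 2, by omega⟩
    subst hc
    have hb : b = n - 2 - 3 * k := by omega
    subst hb
    have hdiv : (2 * k + 1) / 2 = k := by omega
    simp only [hdiv]
    have h3 : 3 * k ≤ n - 2 := by omega
    have e1 : (n - 2 - 3 * k) + (2 * k + 1) = n - 1 - k := by omega
    have e2 : (n - 1 - k) - (2 * k + 1) = n - 2 - 3 * k := by omega
    rw [e1, ← e2, Nat.choose_symm (by omega)]
end

section
/- For every integer $t \ge 3$, the polynomial identity $w_3 \cdot S = g_{2^t-1}$ holds in $\mathbb{Z}_2[w_2,w_3]$, where $S = \sum_{k=0}^{\lfloor (2^{t-1}-2)/3 \rfloor} \binom{2^{t-1}-1-k}{2k+1} w_2^{2^{t-1}-2-3k} w_3^{2k}$. Consequently $S = g_{2^t-4}$. -/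
/-!
The solutions of `2b + 3c = 2n - 1` are `(n - 2 - 3k, 2k + 1)` and those of `2b + 3c = 2n - 4`
are `(n - 2 - 3k, 2k)`, so with `n = 2^(t-1)` both identities compare sums termwise. The first
is then immediate; for the second, Pascal's rule gives
`C(n-1-k, 2k+1) = C(n-2-k, 2k) + C(n-2-k, 2k+1)`, and the last term is even for `n` a power of two.
-/

open MvPolynomial Finset

lemma g_eq_sum_of_enum (r K : ℕ) (b c : ℕ → ℕ)
    (hsol : ∀ k < K, 2 * b k + 3 * c k = r)
    (hinj : ∀ k < K, ∀ l < K, c k = c l → k = l)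
    (hsurj : ∀ b' c', 2 * b' + 3 * c' = r → ∃ k < K, b k = b' ∧ c k = c') :
    g r = ∑ k ∈ range K,
      C ((Nat.choose (b k + c k) (b k) : ZMod 2)) * X 0 ^ b k * X 1 ^ c k := by
  rw [g, ← sum_product', ← sum_filter]
  have hsols : {p ∈ range (r + 1) ×ˢ range (r + 1) | 2 * p.1 + 3 * p.2 = r}
      = (range K).image fun k => (b k, c k) := by
    ext ⟨b', c'⟩
    simp only [mem_filter, mem_product, mem_range, mem_image, Prod.mk.injEq]
    constructor
    · rintro ⟨-, h⟩
      exact hsurj b' c' h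
    · rintro ⟨k, hk, rfl, rfl⟩
      have := hsol k hk
      omega
  rw [hsols, sum_image]
  intro k hk l hl h
  exact hinj k (mem_range.mp hk) l (mem_range.mp hl) (congrArg Prod.snd h)

lemma g_two_mul_sub_one (n : ℕ) (hn : 2 ≤ n) :
    g (2 * n - 1) = ∑ k ∈ range ((n - 2) / 3 + 1),
      C ((Nat.choose (n - 1 - k) (2 * k + 1) : ZMod 2)) * X 0 ^ (n - 2 - 3 * k) *
        X 1 ^ (2 * k + 1) := by
  rw [g_eq_sum_of_enum (2 * n - 1) ((n - 2) / 3 + 1) (fun k => n - 2 - 3 * k) (fun k => 2 * k + 1)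
    (fun k hk => by omega) (fun k _ l _ h => by omega)
    (fun b' c' h => ⟨c' / 2, by omega, by omega, by omega⟩)]
  refine sum_congr rfl fun k hk => ?_
  have hk : 3 * k ≤ n - 2 := by rw [mem_range] at hk; omega
  rw [show n - 2 - 3 * k + (2 * k + 1) = n - 1 - k by omega,
    show n - 2 - 3 * k = n - 1 - k - (2 * k + 1) by omega, Nat.choose_symm (by omega)]

lemma g_two_mul_sub_four (n : ℕ) (hn : 2 ≤ n) :
    g (2 * n - 4) = ∑ k ∈ range ((n - 2) / 3 + 1),
      C ((Nat.choose (n - 2 - k) (2 * k) : ZMod 2)) * X 0 ^ (n - 2 - 3 * k) * X 1 ^ (2 * k) := by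
  rw [g_eq_sum_of_enum (2 * n - 4) ((n - 2) / 3 + 1) (fun k => n - 2 - 3 * k) (fun k => 2 * k)
    (fun k hk => by omega) (fun k _ l _ h => by omega)
    (fun b' c' h => ⟨c' / 2, by omega, by omega, by omega⟩)]
  refine sum_congr rfl fun k hk => ?_
  have hk : 3 * k ≤ n - 2 := by rw [mem_range] at hk; omega
  rw [show n - 2 - 3 * k + 2 * k = n - 2 - k by omega,
    show n - 2 - 3 * k = n - 2 - k - 2 * k by omega, Nat.choose_symm (by omega)]

/-- By Lucas' theorem: for odd `k` both lowest bits are `1` and halving maps `(s, k)` to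
`(s - 1, k / 2)`; for even `k` the top has lowest bit `0` and the bottom `1`. -/
lemma choose_two_pow_sub_two_sub_odd (s k : ℕ) :
    (Nat.choose (2 ^ s - 2 - k) (2 * k + 1) : ZMod 2) = 0 := by
  induction s generalizing k with
  | zero => simp [Nat.choose_eq_zero_of_lt]
  | succ s ih =>
    rw [(ZMod.natCast_eq_natCast_iff _ _ 2).mpr
      (Choose.choose_modEq_choose_mod_mul_choose_div_nat (p := 2))]
    have h2 : 2 ^ (s + 1) = 2 * 2 ^ s := by ring
    rcases Nat.even_or_odd k with ⟨j, rfl⟩ | ⟨j, rfl⟩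
    · rw [show (2 ^ (s + 1) - 2 - (j + j)) % 2 = 0 by omega,
        show (2 * (j + j) + 1) % 2 = 1 by omega]
      simp
    · rw [show (2 ^ (s + 1) - 2 - (2 * j + 1)) / 2 = 2 ^ s - 2 - j by omega,
        show (2 * (2 * j + 1) + 1) / 2 = 2 * j + 1 by omega]
      push_cast
      rw [ih, mul_zero]

lemma choose_two_pow_sub_one_sub_odd (s k : ℕ) (hk : k + 2 ≤ 2 ^ s) :
    (Nat.choose (2 ^ s - 1 - k) (2 * k + 1) : ZMod 2) = Nat.choose (2 ^ s - 2 - k) (2 * k) := by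
  rw [show 2 ^ s - 1 - k = 2 ^ s - 2 - k + 1 by omega, Nat.choose_succ_succ, Nat.cast_add,
    choose_two_pow_sub_two_sub_odd, add_zero]

theorem w3_mul_S_eq_g (t : ℕ) (ht : 3 ≤ t) :
    (X 1) * (∑ k ∈ Finset.range ((2 ^ (t - 1) - 2) / 3 + 1),
        C ((Nat.choose (2 ^ (t - 1) - 1 - k) (2 * k + 1) : ZMod 2)) *
          (X 0) ^ (2 ^ (t - 1) - 2 - 3 * k) * (X 1) ^ (2 * k) : MvPolynomial (Fin 2) (ZMod 2))
      = g (2 ^ t - 1) ∧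
    (∑ k ∈ Finset.range ((2 ^ (t - 1) - 2) / 3 + 1),
        C ((Nat.choose (2 ^ (t - 1) - 1 - k) (2 * k + 1) : ZMod 2)) *
          (X 0) ^ (2 ^ (t - 1) - 2 - 3 * k) * (X 1) ^ (2 * k) : MvPolynomial (Fin 2) (ZMod 2))
      = g (2 ^ t - 4) := by
  have h2t : 2 ^ t = 2 * 2 ^ (t - 1) := by rw [← pow_succ']; congr 1; omega
  have h4 : 4 ≤ 2 ^ (t - 1) := le_trans (by norm_num) (Nat.pow_le_pow_right two_pos (show 2 ≤ t - 1 by omega))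
  rw [h2t, g_two_mul_sub_one _ (by omega), g_two_mul_sub_four _ (by omega), mul_sum]
  constructor
  · refine sum_congr rfl fun k _ => ?_
    ring
  · refine sum_congr rfl fun k hk => ?_
    rw [mem_range] at hk
    rw [choose_two_pow_sub_one_sub_odd _ _ (by omega)]
end

section
/- For every integer $t \ge 3$ and every pair of nonnegative integers $(b,c)$ with $2b+3c = 2^t-4$ and $\binom{b+c}{b}$ odd, the exponent $c$ is divisible by 4. Equivalently, every monomial of $g_{2^t-4} \in \mathbb{Z}_2[w_2,w_3]$ has $w_3$-exponent divisible by 4. -/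
/-!
By Lucas' theorem `C(b+c, b)` is odd iff the binary digits of `c` occur among those of `b + c`.
The equation forces `c` even; if `c = 2m` with `m` odd, then `n = b + c` satisfies
`n + m + 2 = 2^(t-1)`. The digit condition and this equation force `n ≡ m ≡ 3 (mod 4)`, and
replacing `n, m` by `n / 2, m / 2` reproduces the same situation with a smaller `n`: an
infinite descent.
-/

open MvPolynomial Finset

theorem odd_choose_iff_mod_two_and_div_two {n k : ℕ} :
    Odd (n.choose k) ↔ Odd ((n % 2).choose (k % 2)) ∧ Odd ((n / 2).choose (k / 2)) := by
  have : Fact (Nat.Prime 2) := ⟨Nat.prime_two⟩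
  rw [← Nat.odd_mul, Nat.odd_iff, Nat.odd_iff,
    ← Choose.choose_modEq_choose_mod_mul_choose_div_nat]

theorem even_choose_two_mul_of_add_add_two_eq_two_pow {n m s : ℕ} (hm : Odd m)
    (hs : n + m + 2 = 2 ^ s) : Even (n.choose (2 * m)) := by
  induction n using Nat.strong_induction_on generalizing m s with
  | _ n ih =>
  rw [← Nat.not_odd_iff_even]
  intro hodd
  obtain ⟨-, hhalf⟩ := odd_choose_iff_mod_two_and_div_two.mp hodd
  rw [Nat.mul_div_cancel_left m two_pos] at hhalf
  obtain ⟨hbit, hquarter⟩ := odd_choose_iff_mod_two_and_div_two.mp hhalf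
  have hm2 : m % 2 = 1 := Nat.odd_iff.mp hm
  have hn2 : n / 2 % 2 = 1 := by
    by_contra hn2
    rw [Nat.mod_two_ne_one.mp hn2, hm2] at hbit
    simp at hbit
  obtain ⟨k, rfl⟩ : ∃ k, s = k + 2 := by
    rcases s with _ | _ | k
    · simp at hs
    · omega
    · exact ⟨k, rfl⟩
  have hpow : 2 ^ (k + 2) = 2 * 2 ^ (k + 1) := by ring
  have hpow' : 2 ^ (k + 1) = 2 * 2 ^ k := by ring
  -- `n` is odd with bit 1 set, so `n ≡ 3 (mod 4)`, and then `4 ∣ n + m + 2` forces `m ≡ 3`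
  have hm4 : m / 2 % 2 = 1 := by omega
  have hs' : n / 2 + m / 2 + 2 = 2 ^ (k + 1) := by omega
  refine Nat.not_odd_iff_even.mpr (ih (n / 2) (by omega) (Nat.odd_iff.mpr hm4) hs') ?_
  refine odd_choose_iff_mod_two_and_div_two.mpr ⟨by simp, ?_⟩
  rwa [Nat.mul_div_cancel_left _ two_pos]

theorem w3_exponent_div_four (t : ℕ) (ht : 3 ≤ t)
    (b c : ℕ) (h : 2 * b + 3 * c = 2 ^ t - 4) (hodd : Odd (Nat.choose (b + c) b)) :
    4 ∣ c := by
  obtain ⟨k, rfl⟩ : ∃ k, t = k + 3 := ⟨t - 3, by omega⟩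
  have hpow : 2 ^ (k + 3) = 2 * 2 ^ (k + 2) := pow_succ' 2 (k + 2)
  by_contra hc
  have hm : Odd (c / 2) := Nat.odd_iff.mpr (by omega)
  have hs : (b + c) + c / 2 + 2 = 2 ^ (k + 2) := by omega
  have heven := even_choose_two_mul_of_add_add_two_eq_two_pow hm hs
  rw [Nat.two_mul_div_two_of_even (Nat.even_iff.mpr (by omega)), ← Nat.choose_symm_add] at heven
  exact Nat.not_odd_iff_even.mpr heven hodd
end

section
/- For each integer $t \ge 3$ and each integer $i$ with $2 \le i \le t-2$, suppose $b,c$ are nonnegative integers with $2b+3c = 2^t-3+2^i$, $\binom{b+c}{b}$ odd, and $(b,c) \ne (2^{t-1}-2^i, 2^i-1)$. Then $c > 2^i-1$ and $c + 1 - 2^i \equiv 0 \pmod 4$. -/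
private lemma odd_factors {n k : ℕ} (h : Odd (Nat.choose n k)) :
    Odd (Nat.choose (n % 2) (k % 2)) ∧ Odd (Nat.choose (n / 2) (k / 2)) := by
  have : Fact (Nat.Prime 2) := ⟨Nat.prime_two⟩
  have h2 := Choose.choose_modEq_choose_mod_mul_choose_div_nat (p := 2) (n := n) (k := k)
  rw [Nat.ModEq] at h2
  rw [Nat.odd_iff] at h
  rw [h] at h2
  exact Nat.odd_mul.mp (Nat.odd_iff.mpr h2.symm)

private lemma odd_choose_bit : ∀ (j n k : ℕ), Odd (Nat.choose n k) →
    k / 2 ^ j % 2 = 1 → n / 2 ^ j % 2 = 1 := by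
  intro j
  induction j with
  | zero =>
    intro n k h hk
    simp only [pow_zero, Nat.div_one] at hk ⊢
    obtain ⟨h1, _⟩ := odd_factors h
    rw [hk] at h1
    rcases Nat.mod_two_eq_zero_or_one n with hn | hn
    · rw [hn] at h1
      simp [Nat.choose] at h1
    · exact hn
  | succ j ih =>
    intro n k h hk
    obtain ⟨_, h2⟩ := odd_factors h
    have e : ∀ m : ℕ, m / 2 ^ (j + 1) = m / 2 / 2 ^ j := by
      intro m
      rw [Nat.div_div_eq_div_mul, pow_succ']
    rw [e] at hk ⊢
    exact ih _ _ h2 hk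

private lemma div_pred {j a m : ℕ} (h : m + 1 = 2 ^ j * (a + 1)) : m / 2 ^ j = a := by
  have hj : 0 < 2 ^ j := Nat.two_pow_pos j
  have hm : m = 2 ^ j * a + (2 ^ j - 1) := by
    rw [Nat.mul_add, Nat.mul_one] at h; omega
  rw [hm, Nat.mul_add_div hj, Nat.div_eq_of_lt (by omega)]
  omega

private lemma bit_of_dvd {j m : ℕ} (h : 2 ^ (j + 1) ∣ m + 1) : m / 2 ^ j % 2 = 1 := by
  obtain ⟨a, ha⟩ := h
  have ha0 : 0 < a := by
    rcases Nat.eq_zero_or_pos a with h0 | h0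
    · subst h0; simp at ha
    · exact h0
  rw [pow_succ] at ha
  have h' : m + 1 = 2 ^ j * (2 * a - 1 + 1) := by
    have e : 2 * a - 1 + 1 = 2 * a := by omega
    rw [e, ha]; ring
  rw [div_pred h']
  omega

private lemma fill_bit {j m : ℕ} (h1 : 2 ^ j ∣ m + 1) (h2 : m / 2 ^ j % 2 = 1) :
    2 ^ (j + 1) ∣ m + 1 := by
  obtain ⟨a, ha⟩ := h1
  have ha0 : 0 < a := by
    rcases Nat.eq_zero_or_pos a with h0 | h0
    · subst h0; simp at ha
    · exact h0
  have h' : m + 1 = 2 ^ j * ((a - 1) + 1) := by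
    rw [ha]; congr 1; omega
  rw [div_pred h'] at h2
  obtain ⟨e, he⟩ : ∃ e, a = 2 * e := ⟨a / 2, by omega⟩
  exact ⟨e, by rw [ha, he, pow_succ]; ring⟩

private lemma high_bit {j T m : ℕ} (hj : j + 1 ≤ T) :
    (2 ^ T + m) / 2 ^ j % 2 = m / 2 ^ j % 2 := by
  have h1 : 2 ^ j * (2 * 2 ^ (T - j - 1)) = 2 ^ T := by
    rw [← pow_succ', ← pow_add]; congr 1; omega
  rw [← h1, Nat.mul_add_div (Nat.two_pow_pos j), Nat.add_comm, Nat.add_mul_mod_self_left]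

theorem key_arithmetic_step (t i : ℕ) (ht : 3 ≤ t) (hi2 : 2 ≤ i) (hit : i ≤ t - 2)
    (b c : ℕ) (h : 2 * b + 3 * c = 2 ^ t - 3 + 2 ^ i)
    (hodd : Odd (Nat.choose (b + c) b))
    (hne : ¬(b = 2 ^ (t - 1) - 2 ^ i ∧ c = 2 ^ i - 1)) :
    2 ^ i - 1 < c ∧ (c + 1 - 2 ^ i) % 4 = 0 := by
  have ht4 : 4 ≤ t := by omega
  have hQ8 : 8 ∣ 2 ^ (t - 1) := by
    have h8 : (2 : ℕ) ^ 3 ∣ 2 ^ (t - 1) := pow_dvd_pow 2 (by omega)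
    simpa using h8
  have hP4 : 4 ∣ 2 ^ i := by
    have h4 : (2 : ℕ) ^ 2 ∣ 2 ^ i := pow_dvd_pow 2 hi2
    simpa using h4
  have hPQ : 2 * 2 ^ i ≤ 2 ^ (t - 1) := by
    have hle : (2 : ℕ) ^ (i + 1) ≤ 2 ^ (t - 1) := Nat.pow_le_pow_right (by omega) (by omega)
    rw [pow_succ] at hle; omega
  have h2t : 2 ^ t = 2 * 2 ^ (t - 1) := by
    rw [← pow_succ']; congr 1; omega
  rw [h2t] at h
  set Q := 2 ^ (t - 1) with hQdef
  set P := 2 ^ i with hPdef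
  have hQpos : 8 ≤ Q := Nat.le_of_dvd (by positivity) hQ8
  have hPpos : 4 ≤ P := Nat.le_of_dvd (by positivity) hP4
  have hcodd : c % 2 = 1 := by omega
  have hsym : Nat.choose (b + c) c = Nat.choose (b + c) b := by
    have hs := Nat.choose_symm (Nat.le_add_right b c)
    simpa using hs
  have hoc : Odd (Nat.choose (b + c) c) := by rw [hsym]; exact hodd
  have hs1 : (b + c) / 2 ^ 0 % 2 = 1 :=
    odd_choose_bit 0 (b + c) c hoc (by simpa using hcodd)
  simp only [pow_zero, Nat.div_one] at hs1
  have hbeven : b % 2 = 0 := by omega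
  have hc4 : c % 4 = 3 := by omega
  by_cases hcP : P - 1 < c
  · exact ⟨hcP, by omega⟩
  · exfalso
    push_neg at hcP
    by_cases hceq : c = P - 1
    · exact hne ⟨by omega, hceq⟩
    · have hclt : c + 1 < P := by omega
      set u := c + 1 with hudef
      have hu4 : 4 ∣ u := by omega
      obtain ⟨v, hv⟩ : ∃ v, u + 2 * v = P := ⟨(P - u) / 2, by omega⟩
      have hv2 : 2 ≤ v := by omega
      set m := v - 1 with hmdef
      have hsm : b + c = Q + m := by omega
      have key : ∀ d, 2 + d ≤ i → 2 ^ (2 + d) ∣ u ∧ 2 ^ (1 + d) ∣ m + 1 := by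
        intro d
        induction d with
        | zero =>
          intro _
          constructor
          · simpa using hu4
          · have e1 : (2 : ℕ) ^ (1 + 0) = 2 := by norm_num
            rw [e1]; omega
        | succ d ih =>
          intro hd
          obtain ⟨hu', hm'⟩ := ih (by omega)
          have hcbit : c / 2 ^ (1 + d) % 2 = 1 := by
            apply bit_of_dvd
            have e : (1 + d) + 1 = 2 + d := by omega
            rw [e]
            exact hu'
          have hsbit : (b + c) / 2 ^ (1 + d) % 2 = 1 := odd_choose_bit _ _ _ hoc hcbit
          rw [hsm, hQdef] at hsbit
          have hmbit : m / 2 ^ (1 + d) % 2 = 1 := by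
            rwa [high_bit (by omega)] at hsbit
          have hmv : 2 ^ (2 + d) ∣ m + 1 := by
            have hf := fill_bit hm' hmbit
            have e : (1 + d) + 1 = 2 + d := by omega
            rwa [e] at hf
          constructor
          · have hPd : 2 ^ (2 + (d + 1)) ∣ P := by
              rw [hPdef]
              exact pow_dvd_pow 2 (by omega)
            have h2v : 2 ^ (2 + (d + 1)) ∣ 2 * v := by
              have hveq : 2 * v = 2 * (m + 1) := by omega
              rw [hveq]
              have hmul := mul_dvd_mul_left 2 hmv
              have e : 2 * 2 ^ (2 + d) = 2 ^ (2 + (d + 1)) := by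
                ring
              rwa [e] at hmul
            have hueq : u = P - 2 * v := by omega
            rw [hueq]
            exact Nat.dvd_sub hPd h2v
          · have e : (2 + d) = 1 + (d + 1) := by omega
            rwa [e] at hmv
      obtain ⟨hfin, _⟩ := key (i - 2) (by omega)
      have heP : (2 : ℕ) ^ (2 + (i - 2)) = P := by
        rw [hPdef]; congr 1; omega
      rw [heP] at hfin
      have := Nat.le_of_dvd (by omega) hfin
      omega
end

section
/- In $\mathbb{Z}_2[w_1,w_2,w_3]$ with $\bar w_r = \sum_{a+2b+3c=r} \binom{a+b+c}{a}\binom{b+c}{b} w_1^a w_2^b w_3^c$ (mod 2), for every $t \ge 3$: if $\alpha w_1 \bar w_{2^t-4} = \beta \bar w_{2^t-3}$ for some $\alpha, \beta \in \mathbb{Z}_2$, then $\alpha = \beta = 0$. -/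
open MvPolynomial Finset

/-- `wbar r = ∑_{a+2b+3c=r} C(a+b+c,a) C(b+c,b) w₁^a w₂^b w₃^c` in `ℤ₂[w₁,w₂,w₃]`
(variable `X 0` is `w₁`, `X 1` is `w₂`, `X 2` is `w₃`). -/
noncomputable def wbar (r : ℕ) : MvPolynomial (Fin 3) (ZMod 2) :=
  ∑ a ∈ Finset.range (r + 1), ∑ b ∈ Finset.range (r + 1), ∑ c ∈ Finset.range (r + 1),
    if a + 2 * b + 3 * c = r then
      C ((Nat.choose (a + b + c) a : ZMod 2) * (Nat.choose (b + c) b : ZMod 2)) *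
        (X 0) ^ a * (X 1) ^ b * (X 2) ^ c
    else 0

/-- The exponent finsupp of the monomial `w₁^a w₂^b w₃^c`. -/
noncomputable def mexp (a b c : ℕ) : Fin 3 →₀ ℕ :=
  Finsupp.single 0 a + Finsupp.single 1 b + Finsupp.single 2 c

lemma key_s11 (k : ZMod 2) (a b c : ℕ) :
    C k * (X 0:MvPolynomial (Fin 3) (ZMod 2)) ^ a * X 1 ^ b * X 2 ^ c
    = monomial (mexp a b c) k := by
  rw [mexp, monomial_add_single, monomial_add_single, ← zero_add (Finsupp.single 0 a),
    monomial_add_single, ← C_apply]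

lemma mexp_eq_iff {a b c a' b' c' : ℕ} :
    mexp a' b' c' = mexp a b c ↔ a' = a ∧ b' = b ∧ c' = c := by
  constructor
  · intro h
    have h0 := DFunLike.congr_fun h 0
    have h1 := DFunLike.congr_fun h 1
    have h2 := DFunLike.congr_fun h 2
    simp [mexp, Finsupp.single_apply] at h0 h1 h2
    exact ⟨h0, h1, h2⟩
  · rintro ⟨rfl, rfl, rfl⟩; rfl

lemma coeff_wbar (r a b c : ℕ) :
    coeff (mexp a b c) (wbar r)
    = if a + 2*b + 3*c = r then (Nat.choose (a+b+c) a : ZMod 2) * (Nat.choose (b+c) b) else 0 := by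
  unfold wbar
  simp only [coeff_sum, apply_ite (coeff (mexp a b c)), key_s11, coeff_monomial, coeff_zero,
    mexp_eq_iff]
  by_cases hr : a + 2*b + 3*c = r
  · rw [Finset.sum_eq_single a, Finset.sum_eq_single b, Finset.sum_eq_single c]
    · simp [hr]
    · intro c' _ hc'; simp [hc']
    · intro hc; exact absurd (Finset.mem_range.2 (by omega)) hc
    · intro b' _ hb'
      rw [Finset.sum_eq_zero]; intro c' _; simp [hb']
    · intro hb; exact absurd (Finset.mem_range.2 (by omega)) hb
    · intro a' _ ha'
      rw [Finset.sum_eq_zero]; intro b' _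
      rw [Finset.sum_eq_zero]; intro c' _; simp [ha']
    · intro ha; exact absurd (Finset.mem_range.2 (by omega)) ha
  · rw [if_neg hr, Finset.sum_eq_zero]; intro a' _
    rw [Finset.sum_eq_zero]; intro b' _
    rw [Finset.sum_eq_zero]; intro c' _
    by_cases h' : a' + 2*b' + 3*c' = r
    · rw [if_pos h', if_neg]; rintro ⟨rfl, rfl, rfl⟩; omega
    · rw [if_neg h']

lemma mexp_succ (a b c : ℕ) : mexp (a+1) b c = Finsupp.single 0 1 + mexp a b c := by
  simp only [mexp, show a + 1 = 1 + a from by omega, Finsupp.single_add]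
  abel

lemma coeff_X0_mul (p : MvPolynomial (Fin 3) (ZMod 2)) (a b c : ℕ) :
    coeff (mexp (a+1) b c) (X 0 * p) = coeff (mexp a b c) p := by
  rw [mexp_succ, coeff_X_mul]

theorem wbar_linear_independence_1 (t : ℕ) (ht : 3 ≤ t) (a b : ZMod 2)
    (h : C a * (X 0 * wbar (2 ^ t - 4)) = C b * wbar (2 ^ t - 3)) :
    a = 0 ∧ b = 0 := by
  obtain ⟨k, rfl⟩ : ∃ k, t = k + 3 := ⟨t - 3, by omega⟩
  obtain ⟨M, hM⟩ : ∃ M, 2 ^ k = M + 1 := ⟨2 ^ k - 1, by have := Nat.one_le_two_pow (n := k); omega⟩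
  have h8 : 2 ^ (k + 3) = 8 * M + 8 := by rw [pow_add, hM]; ring
  have h4 : 2 ^ (k + 2) = 4 * M + 4 := by rw [pow_add, hM]; ring
  have hodd : ((Nat.choose (4 * M + 3) 2 : ℕ) : ZMod 2) = 1 := by
    have e : (4*M+3).choose 2 = (4*M+3) * (2*M+1) := by
      rw [Nat.choose_two_right, show 4*M+3-1 = 4*M+2 from by omega,
        show (4*M+3) * (4*M+2) = ((4*M+3)*(2*M+1)) * 2 from by ring,
        Nat.mul_div_cancel _ two_pos]
    have e2 : (4*M+3) % 2 = 1 := by omega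
    have e3 : (2*M+1) % 2 = 1 := by omega
    have : ((4*M+3) * (2*M+1)) % 2 = 1 := by rw [Nat.mul_mod, e2, e3]
    rw [e, ← ZMod.natCast_mod, this, Nat.cast_one]
  have heven : ((Nat.choose (2 ^ (k+2)) 3 : ℕ) : ZMod 2) = 0 := by
    rw [ZMod.natCast_eq_zero_iff]
    exact Nat.Prime.dvd_choose_pow Nat.prime_two (by norm_num) (by omega)
  have hc1 := congrArg (coeff (mexp (2+1) (4*M+1) 0)) h
  rw [coeff_C_mul, coeff_C_mul, coeff_X0_mul, coeff_wbar, coeff_wbar,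
    if_pos (by omega), if_pos (by omega),
    show 2+(4*M+1)+0 = 4*M+3 from by omega,
    show 2+1+(4*M+1)+0 = 2^(k+2) from by omega,
    show (4*M+1)+0 = 4*M+1 from by omega,
    Nat.choose_self, hodd, heven, Nat.cast_one] at hc1
  have ha : a = 0 := by simpa using hc1
  subst ha
  rw [map_zero, zero_mul] at h
  have hc2 := congrArg (coeff (mexp (8*M+5) 0 0)) h.symm
  rw [coeff_C_mul, coeff_wbar, if_pos (by omega), Nat.choose_self,
    show (0:ℕ)+0 = 0 from rfl, Nat.choose_self, coeff_zero] at hc2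
  have hb : b = 0 := by simpa using hc2
  exact ⟨rfl, hb⟩
end

section
/- In $\mathbb{Z}_2[w_1,w_2,w_3]$ with $\bar w_r$ as defined, for every $t \ge 3$: if $\alpha w_1^2 \bar w_{2^t-5} = \lambda w_1 \bar w_{2^t-4} + \mu \bar w_{2^t-3}$ for some $\alpha,\lambda,\mu \in \mathbb{Z}_2$, then $\alpha = \lambda = \mu = 0$. -/
open MvPolynomial Finset

lemma finsupp_eq_iff (a b c : ℕ) (d : Fin 3 →₀ ℕ) :
    (Finsupp.single 0 a + Finsupp.single 1 b + Finsupp.single 2 c : Fin 3 →₀ ℕ) = d ↔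
      a = d 0 ∧ b = d 1 ∧ c = d 2 := by
  constructor
  · rintro rfl
    refine ⟨?_, ?_, ?_⟩ <;> simp [Finsupp.single_apply]
  · rintro ⟨ha, hb, hc⟩
    ext i
    fin_cases i <;> simp [Finsupp.single_apply, ha, hb, hc]

lemma coeff_wbar_s12 (r : ℕ) (d : Fin 3 →₀ ℕ) (hd : d 0 + 2 * d 1 + 3 * d 2 = r) :
    coeff d (wbar r) =
      (Nat.choose (d 0 + d 1 + d 2) (d 0) : ZMod 2) * (Nat.choose (d 1 + d 2) (d 1) : ZMod 2) := by
  unfold wbar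
  simp only [coeff_sum]
  have step : ∀ a b c : ℕ,
      coeff d (if a + 2 * b + 3 * c = r then
        C ((Nat.choose (a + b + c) a : ZMod 2) * (Nat.choose (b + c) b : ZMod 2)) *
          (X 0 : MvPolynomial (Fin 3) (ZMod 2)) ^ a * (X 1) ^ b * (X 2) ^ c
      else 0) =
      if c = d 2 then (if b = d 1 then (if a = d 0 then
        (Nat.choose (d 0 + d 1 + d 2) (d 0) : ZMod 2) * (Nat.choose (d 1 + d 2) (d 1) : ZMod 2)
        else 0) else 0) else 0 := by
    intro a b c
    have hm : (C ((Nat.choose (a + b + c) a : ZMod 2) * (Nat.choose (b + c) b : ZMod 2)) *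
        (X 0 : MvPolynomial (Fin 3) (ZMod 2)) ^ a * (X 1) ^ b * (X 2) ^ c)
        = monomial (Finsupp.single 0 a + Finsupp.single 1 b + Finsupp.single 2 c)
          ((Nat.choose (a + b + c) a : ZMod 2) * (Nat.choose (b + c) b : ZMod 2)) := by
      rw [X_pow_eq_monomial, X_pow_eq_monomial, X_pow_eq_monomial, C_apply,
        monomial_mul, monomial_mul, monomial_mul]
      simp
    rw [apply_ite (coeff d), coeff_zero, hm, coeff_monomial]
    simp only [finsupp_eq_iff]
    by_cases ha : a = d 0 <;> by_cases hb : b = d 1 <;> by_cases hc : c = d 2 <;>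
      simp_all
  have h0 : d 0 ∈ Finset.range (r + 1) := by rw [Finset.mem_range]; omega
  have h1 : d 1 ∈ Finset.range (r + 1) := by rw [Finset.mem_range]; omega
  have h2 : d 2 ∈ Finset.range (r + 1) := by rw [Finset.mem_range]; omega
  simp only [step, Finset.sum_ite_eq', h0, h1, h2, if_true]

lemma coeff_wbar' (r p q : ℕ) (h : p + 2 * q = r) :
    coeff (Finsupp.single 0 p + Finsupp.single 1 q) (wbar r) =
      (Nat.choose (p + q) p : ZMod 2) := by
  have e0 : ((Finsupp.single 0 p + Finsupp.single 1 q : Fin 3 →₀ ℕ)) 0 = p := by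
    simp [Finsupp.single_apply]
  have e1 : ((Finsupp.single 0 p + Finsupp.single 1 q : Fin 3 →₀ ℕ)) 1 = q := by
    simp [Finsupp.single_apply]
  have e2 : ((Finsupp.single 0 p + Finsupp.single 1 q : Fin 3 →₀ ℕ)) 2 = 0 := by
    simp [Finsupp.single_apply]
  rw [coeff_wbar_s12 r _ (by rw [e0, e1, e2]; omega), e0, e1, e2]
  simp


lemma even_cast (k : ℕ) (hk : k % 2 = 0) : ((k : ZMod 2)) = 0 := by
  obtain ⟨j, rfl⟩ : ∃ j, k = 2 * j := ⟨k / 2, by omega⟩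
  push_cast
  rw [show (2 : ZMod 2) = 0 from rfl]
  ring

lemma odd_cast (k : ℕ) (hk : k % 2 = 1) : ((k : ZMod 2)) = 1 := by
  obtain ⟨j, rfl⟩ : ∃ j, k = 2 * j + 1 := ⟨k / 2, by omega⟩
  push_cast
  rw [show (2 : ZMod 2) = 0 from rfl]
  ring

lemma coeff_Xsq_mul (w : MvPolynomial (Fin 3) (ZMod 2)) (p q : ℕ) :
    coeff (Finsupp.single 0 (p + 2) + Finsupp.single 1 q) ((X 0) ^ 2 * w) =
      coeff (Finsupp.single 0 p + Finsupp.single 1 q) w := by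
  rw [show (Finsupp.single 0 (p + 2) + Finsupp.single 1 q : Fin 3 →₀ ℕ)
      = Finsupp.single 0 2 + (Finsupp.single 0 p + Finsupp.single 1 q) from by
        rw [Finsupp.single_add]; abel,
    X_pow_eq_monomial, coeff_monomial_mul, one_mul]

lemma coeff_Xsq_mul_one (w : MvPolynomial (Fin 3) (ZMod 2)) (q : ℕ) :
    coeff (Finsupp.single 0 1 + Finsupp.single 1 q) ((X 0) ^ 2 * w) = 0 := by
  rw [X_pow_eq_monomial, coeff_monomial_mul', if_neg]
  rw [Finsupp.single_le_iff]
  simp [Finsupp.single_apply]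

lemma coeff_X_mul_w (w : MvPolynomial (Fin 3) (ZMod 2)) (p q : ℕ) :
    coeff (Finsupp.single 0 (p + 1) + Finsupp.single 1 q) ((X 0) * w) =
      coeff (Finsupp.single 0 p + Finsupp.single 1 q) w := by
  rw [show (Finsupp.single 0 (p + 1) + Finsupp.single 1 q : Fin 3 →₀ ℕ)
      = Finsupp.single 0 1 + (Finsupp.single 0 p + Finsupp.single 1 q) from by
        rw [Finsupp.single_add]; abel,
    coeff_X_mul]

theorem wbar_linear_independence_2 (t : ℕ) (ht : 3 ≤ t) (a l m : ZMod 2)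
    (h : C a * ((X 0) ^ 2 * wbar (2 ^ t - 5)) =
         C l * (X 0 * wbar (2 ^ t - 4)) + C m * wbar (2 ^ t - 3)) :
    a = 0 ∧ l = 0 ∧ m = 0 := by
  obtain ⟨s, rfl⟩ : ∃ s, t = s + 3 := ⟨t - 3, by omega⟩
  obtain ⟨n, hn⟩ : ∃ n, 2 ^ s = n + 1 := ⟨2 ^ s - 1, by have := Nat.one_le_two_pow (n := s); omega⟩
  have h8 : 2 ^ (s + 3) = 8 * n + 8 := by rw [pow_add, hn]; ring
  rw [show 2 ^ (s + 3) - 5 = 8 * n + 3 from by omega,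
      show 2 ^ (s + 3) - 4 = 8 * n + 4 from by omega,
      show 2 ^ (s + 3) - 3 = 8 * n + 5 from by omega] at h
  -- Equation A : monomial X0^(8n+5)
  have hA := congrArg (coeff (Finsupp.single 0 (8 * n + 5) + Finsupp.single 1 0 : Fin 3 →₀ ℕ)) h
  have cA1 : coeff (Finsupp.single 0 (8 * n + 5) + Finsupp.single 1 0 : Fin 3 →₀ ℕ)
      ((X 0) ^ 2 * wbar (8 * n + 3)) = 1 := by
    rw [show 8 * n + 5 = (8 * n + 3) + 2 from by omega, coeff_Xsq_mul,
      coeff_wbar' _ _ _ (by omega)]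
    simp
  have cA2 : coeff (Finsupp.single 0 (8 * n + 5) + Finsupp.single 1 0 : Fin 3 →₀ ℕ)
      ((X 0) * wbar (8 * n + 4)) = 1 := by
    rw [show 8 * n + 5 = (8 * n + 4) + 1 from by omega, coeff_X_mul_w,
      coeff_wbar' _ _ _ (by omega)]
    simp
  have cA3 : coeff (Finsupp.single 0 (8 * n + 5) + Finsupp.single 1 0 : Fin 3 →₀ ℕ)
      (wbar (8 * n + 5)) = 1 := by
    rw [coeff_wbar' _ _ _ (by omega)]
    simp
  rw [coeff_add, coeff_C_mul, coeff_C_mul, coeff_C_mul, cA1, cA2, cA3] at hA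
  -- Equation B : monomial X0^(8n+3) * X1
  have hB := congrArg (coeff (Finsupp.single 0 (8 * n + 3) + Finsupp.single 1 1 : Fin 3 →₀ ℕ)) h
  have cB1 : coeff (Finsupp.single 0 (8 * n + 3) + Finsupp.single 1 1 : Fin 3 →₀ ℕ)
      ((X 0) ^ 2 * wbar (8 * n + 3)) = 0 := by
    rw [show 8 * n + 3 = (8 * n + 1) + 2 from by omega, coeff_Xsq_mul,
      coeff_wbar' _ _ _ (by omega),
      show 8 * n + 1 + 1 = (8 * n + 1) + 1 from rfl, Nat.choose_succ_self_right,
      even_cast _ (by omega)]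
  have cB2 : coeff (Finsupp.single 0 (8 * n + 3) + Finsupp.single 1 1 : Fin 3 →₀ ℕ)
      ((X 0) * wbar (8 * n + 4)) = 1 := by
    rw [show 8 * n + 3 = (8 * n + 2) + 1 from by omega, coeff_X_mul_w,
      coeff_wbar' _ _ _ (by omega),
      show 8 * n + 2 + 1 = (8 * n + 2) + 1 from rfl, Nat.choose_succ_self_right,
      odd_cast _ (by omega)]
  have cB3 : coeff (Finsupp.single 0 (8 * n + 3) + Finsupp.single 1 1 : Fin 3 →₀ ℕ)
      (wbar (8 * n + 5)) = 0 := by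
    rw [coeff_wbar' _ _ _ (by omega),
      show 8 * n + 3 + 1 = (8 * n + 3) + 1 from rfl, Nat.choose_succ_self_right,
      even_cast _ (by omega)]
  rw [coeff_add, coeff_C_mul, coeff_C_mul, coeff_C_mul, cB1, cB2, cB3] at hB
  -- Equation C : monomial X0 * X1^(4n+2)
  have hC := congrArg (coeff (Finsupp.single 0 1 + Finsupp.single 1 (4 * n + 2) : Fin 3 →₀ ℕ)) h
  have cC1 : coeff (Finsupp.single 0 1 + Finsupp.single 1 (4 * n + 2) : Fin 3 →₀ ℕ)
      ((X 0) ^ 2 * wbar (8 * n + 3)) = 0 := coeff_Xsq_mul_one _ _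
  have cC2 : coeff (Finsupp.single 0 1 + Finsupp.single 1 (4 * n + 2) : Fin 3 →₀ ℕ)
      ((X 0) * wbar (8 * n + 4)) = 1 := by
    rw [show (1 : ℕ) = 0 + 1 from rfl, coeff_X_mul_w, coeff_wbar' _ _ _ (by omega)]
    simp
  have cC3 : coeff (Finsupp.single 0 1 + Finsupp.single 1 (4 * n + 2) : Fin 3 →₀ ℕ)
      (wbar (8 * n + 5)) = 1 := by
    rw [coeff_wbar' _ _ _ (by omega),
      show 1 + (4 * n + 2) = (4 * n + 2) + 1 from by omega]
    rw [Nat.choose_one_right, odd_cast _ (by omega)]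
  rw [coeff_add, coeff_C_mul, coeff_C_mul, coeff_C_mul, cC1, cC2, cC3] at hC
  simp only [mul_one, mul_zero, zero_add, add_zero] at hA hB hC
  have hl : l = 0 := hB.symm
  have hm : m = 0 := by rw [hl, zero_add] at hC; exact hC.symm
  exact ⟨by rw [hA, hl, hm, add_zero], hl, hm⟩
end

section
/- For every $t \ge 3$, in the identity $(\alpha w_1^3 + \beta w_1 w_2 + \mu w_3)\bar w_{2^t-3} = \lambda w_1^2 \bar w_{2^t-2} + \nu w_1 \bar w_{2^t-1}$ in $\mathbb{Z}_2[w_1,w_2,w_3]$ with $\alpha,\beta,\mu,\lambda,\nu \in \mathbb{Z}_2$, necessarily $\alpha = \beta = 0$. -/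
/-!
Write `2 ^ t = 8 (P + 1)`. Comparing the coefficients of `w₁⁴ w₂^(4P+2)` and of
`w₁³ w₂^(4P+1) w₃` on both sides of the identity gives `α = 0` and `β = 0` respectively. Every
binomial coefficient entering these two coefficients has lower entry below `4`, so by Lucas'
theorem its parity only depends on the upper entry modulo `4`, which makes all of them explicit.
-/

open MvPolynomial Finset

theorem natCast_choose_eq_of_modEq_four {n n' k : ℕ} (hn : n ≡ n' [MOD 4]) (hk : k < 4) :
    (n.choose k : ZMod 2) = n'.choose k := by
  rw [← Int.cast_natCast, ← Int.cast_natCast (n'.choose k), ZMod.intCast_eq_intCast_iff]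
  have : Fact (Nat.Prime 2) := ⟨Nat.prime_two⟩
  unfold Nat.ModEq at hn
  calc (n.choose k : ℤ)
    _ ≡ (n / 2 ^ 2).choose (k / 2 ^ 2) *
          ∏ i ∈ Finset.range 2, (n / 2 ^ i % 2).choose (k / 2 ^ i % 2) [ZMOD 2] :=
        Choose.choose_modEq_choose_mul_prod_range_choose 2
    _ = (n' / 2 ^ 2).choose (k / 2 ^ 2) *
          ∏ i ∈ Finset.range 2, (n' / 2 ^ i % 2).choose (k / 2 ^ i % 2) := by
        have h0 : n % 2 = n' % 2 := by omega
        have h1 : n / 2 % 2 = n' / 2 % 2 := by omega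
        simp [Finset.prod_range_succ, Nat.div_eq_of_lt hk, h0, h1]
    _ ≡ n'.choose k [ZMOD 2] := (Choose.choose_modEq_choose_mul_prod_range_choose 2).symm

noncomputable def expVec (a b c : ℕ) : Fin 3 →₀ ℕ :=
  Finsupp.single 0 a + Finsupp.single 1 b + Finsupp.single 2 c

@[simp] lemma expVec_apply_zero (a b c : ℕ) : expVec a b c 0 = a := by simp [expVec]
@[simp] lemma expVec_apply_one (a b c : ℕ) : expVec a b c 1 = b := by simp [expVec]
@[simp] lemma expVec_apply_two (a b c : ℕ) : expVec a b c 2 = c := by simp [expVec]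

lemma expVec_inj {a b c a' b' c' : ℕ} :
    expVec a b c = expVec a' b' c' ↔ a = a' ∧ b = b' ∧ c = c' := by
  simp [Finsupp.ext_iff, Fin.forall_fin_succ]

lemma expVec_le_expVec {a b c a' b' c' : ℕ} :
    expVec a b c ≤ expVec a' b' c' ↔ a ≤ a' ∧ b ≤ b' ∧ c ≤ c' := by
  simp [Finsupp.le_def, Fin.forall_fin_succ]

lemma expVec_tsub_expVec (a b c a' b' c' : ℕ) :
    expVec a b c - expVec a' b' c' = expVec (a - a') (b - b') (c - c') := by
  ext i; fin_cases i <;> simp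

lemma monomial_expVec {R : Type*} [CommSemiring R] (a b c : ℕ) (k : R) :
    monomial (expVec a b c) k = C k * X 0 ^ a * X 1 ^ b * X 2 ^ c := by
  simp only [expVec, X_pow_eq_monomial, C_apply, monomial_mul, mul_one, zero_add]

lemma coeff_expVec_wbar (r a b c : ℕ) :
    coeff (expVec a b c) (wbar r) = if a + 2 * b + 3 * c = r then
      ((a + b + c).choose a * (b + c).choose b : ZMod 2) else 0 := by
  simp only [wbar, ← monomial_expVec, coeff_sum, apply_ite (coeff _), coeff_zero, coeff_monomial,
    expVec_inj, ← ite_and]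
  have hcond : ∀ x y z, (x + 2 * y + 3 * z = r ∧ x = a ∧ y = b ∧ z = c) ↔
      (x = a ∧ y = b ∧ z = c ∧ a + 2 * b + 3 * c = r) := by
    omega
  simp only [hcond, ite_and, Finset.sum_ite_irrel, Finset.sum_const_zero, Finset.sum_ite_eq',
    Finset.mem_range]
  split_ifs <;> first | rfl | omega

lemma coeff_expVec_wbar_of_lt_four {a c : ℕ} (ha : a < 4) (hc : c < 4) (r b : ℕ) :
    coeff (expVec a b c) (wbar r) = if a + 2 * b + 3 * c = r then
      ((a + b % 4 + c).choose a * (b % 4 + c).choose c : ZMod 2) else 0 := by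
  rw [coeff_expVec_wbar, Nat.choose_symm_add]
  congr 2 <;> apply natCast_choose_eq_of_modEq_four _ ‹_› <;> simp [Nat.ModEq, Nat.add_mod]

lemma coeff_expVec_monomial_mul {R : Type*} [CommSemiring R] (A B C a b c : ℕ) (k : R)
    (p : MvPolynomial (Fin 3) R) :
    coeff (expVec A B C) (monomial (expVec a b c) k * p) =
      if a ≤ A ∧ b ≤ B ∧ c ≤ C then k * coeff (expVec (A - a) (B - b) (C - c)) p
      else 0 := by
  simp only [coeff_monomial_mul', expVec_le_expVec, expVec_tsub_expVec]

theorem wbar_identity_forces_alpha_beta_zero (t : ℕ) (ht : 3 ≤ t)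
    (a b m l n : ZMod 2)
    (h : (C a * (X 0) ^ 3 + C b * (X 0 * X 1) + C m * X 2) * wbar (2 ^ t - 3) =
         C l * ((X 0) ^ 2 * wbar (2 ^ t - 2)) + C n * (X 0 * wbar (2 ^ t - 1))) :
    a = 0 ∧ b = 0 := by
  obtain ⟨P, hP⟩ : ∃ P, 2 ^ t = 8 * P + 8 := by
    obtain ⟨s, rfl⟩ := Nat.exists_eq_add_of_le ht
    exact ⟨2 ^ s - 1, by rw [pow_add]; have := Nat.one_le_two_pow (n := s); omega⟩
  have h' : monomial (expVec 3 0 0) a * wbar (8 * P + 5) +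
      monomial (expVec 1 1 0) b * wbar (8 * P + 5) +
      monomial (expVec 0 0 1) m * wbar (8 * P + 5) =
      monomial (expVec 2 0 0) l * wbar (8 * P + 6) +
      monomial (expVec 1 0 0) n * wbar (8 * P + 7) := by
    simpa [hP, monomial_expVec, add_mul, mul_assoc] using h
  constructor
  · have H := congrArg (coeff (expVec 4 (4 * P + 2) 0)) h'
    simp (disch := omega) [coeff_expVec_monomial_mul, coeff_expVec_wbar_of_lt_four, if_pos,
      Nat.choose] at H
    reduce_mod_char at H
    exact H
  · have H := congrArg (coeff (expVec 3 (4 * P + 1) 1)) h'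
    simp (disch := omega) [coeff_expVec_monomial_mul, coeff_expVec_wbar_of_lt_four, if_pos,
      Nat.choose] at H
    reduce_mod_char at H
    exact H
end

section
/- For every $t \ge 3$, the monomial $w_2^{2^{t-1}-1}$ appears in $\bar w_{2^t-2} \in \mathbb{Z}_2[w_1,w_2,w_3]$ with coefficient 1, i.e., $\binom{2^{t-1}-1}{0}\binom{2^{t-1}-1}{2^{t-1}-1}$ is odd; moreover $w_2^{2^{t-1}-1}$ does not appear in $\bar w_{2^t-3}$ multiplied by $w_1^3$, $w_1 w_2$, or $w_3$, nor in $w_1^2\bar w_{2^t-2}$ or $w_1\bar w_{2^t-1}$ times $w_2$-free corrections. -/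
open MvPolynomial Finset

lemma coeff_single1_X_mul (p : MvPolynomial (Fin 3) (ZMod 2)) (n : ℕ) (s : Fin 3)
    (hs : s ≠ 1) : MvPolynomial.coeff (Finsupp.single (1 : Fin 3) n) (X s * p) = 0 := by
  rw [coeff_X_mul']
  simp [Finsupp.single_apply, Ne.symm hs]

lemma single_eq_iff (a b c n : ℕ) :
    Finsupp.single (0 : Fin 3) a + Finsupp.single 1 b + Finsupp.single 2 c
      = Finsupp.single (1 : Fin 3) n ↔ a = 0 ∧ b = n ∧ c = 0 := by
  constructor
  · intro h
    have h0 := DFunLike.congr_fun h 0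
    have h1 := DFunLike.congr_fun h 1
    have h2 := DFunLike.congr_fun h 2
    simp [Finsupp.single_apply] at h0 h1 h2
    exact ⟨h0, h1, h2⟩
  · rintro ⟨rfl, rfl, rfl⟩
    simp

lemma coeff_single1_wbar (n r : ℕ) (hn : n ≤ r) :
    MvPolynomial.coeff (Finsupp.single (1 : Fin 3) n) (wbar r)
      = if 2 * n = r then 1 else 0 := by
  unfold wbar
  simp only [coeff_sum, X_pow_eq_monomial, monomial_mul, C_mul_monomial, mul_one]
  rw [Finset.sum_eq_single 0]
  · rw [Finset.sum_eq_single n]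
    · rw [Finset.sum_eq_single 0]
      · rw [apply_ite (MvPolynomial.coeff (Finsupp.single (1 : Fin 3) n)), coeff_monomial,
          if_pos ((single_eq_iff 0 n 0 n).mpr ⟨rfl, rfl, rfl⟩)]
        by_cases h : 2 * n = r
        · rw [if_pos (by omega), if_pos h]; simp
        · rw [if_neg (by omega), if_neg h, coeff_zero]
      · intro c _ hc
        split
        · rw [coeff_monomial, if_neg]
          rw [single_eq_iff]; tauto
        · simp
      · intro h; exact absurd (Finset.mem_range.2 (by omega)) h
    · intro b _ hb
      apply Finset.sum_eq_zero
      intro c _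
      split
      · rw [coeff_monomial, if_neg]
        rw [single_eq_iff]; tauto
      · simp
    · intro h; exact absurd (Finset.mem_range.2 (by omega)) h
  · intro a _ ha
    apply Finset.sum_eq_zero; intro b _; apply Finset.sum_eq_zero; intro c _
    split
    · rw [coeff_monomial, if_neg]
      rw [single_eq_iff]; tauto
    · simp
  · intro h; exact absurd (Finset.mem_range.2 (by omega)) h

theorem coeff_w2_pow_in_wbar (t : ℕ) (ht : 3 ≤ t) :
    MvPolynomial.coeff (Finsupp.single (1 : Fin 3) (2 ^ (t - 1) - 1)) (wbar (2 ^ t - 2)) = 1 ∧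
    MvPolynomial.coeff (Finsupp.single (1 : Fin 3) (2 ^ (t - 1) - 1))
      ((X 0) ^ 3 * wbar (2 ^ t - 3)) = 0 ∧
    MvPolynomial.coeff (Finsupp.single (1 : Fin 3) (2 ^ (t - 1) - 1))
      (X 0 * X 1 * wbar (2 ^ t - 3)) = 0 ∧
    MvPolynomial.coeff (Finsupp.single (1 : Fin 3) (2 ^ (t - 1) - 1))
      (X 2 * wbar (2 ^ t - 3)) = 0 ∧
    MvPolynomial.coeff (Finsupp.single (1 : Fin 3) (2 ^ (t - 1) - 1))
      ((X 0) ^ 2 * wbar (2 ^ t - 2)) = 0 ∧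
    MvPolynomial.coeff (Finsupp.single (1 : Fin 3) (2 ^ (t - 1) - 1))
      (X 0 * wbar (2 ^ t - 1)) = 0 := by
  have h1 : 2 ^ (t-1) ≥ 4 := by
    calc 4 = 2^2 := rfl
      _ ≤ 2^(t-1) := Nat.pow_le_pow_right (by norm_num) (by omega)
  have h2 : 2 ^ t = 2 * 2 ^ (t-1) := by
    rw [← pow_succ']
    congr 1
    omega
  refine ⟨?_, ?_, ?_, ?_, ?_, ?_⟩
  · rw [coeff_single1_wbar _ _ (by omega), if_pos (by omega)]
  · rw [show (X 0 : MvPolynomial (Fin 3) (ZMod 2))^3 * wbar (2^t-3)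
        = X 0 * ((X 0)^2 * wbar (2^t-3)) by ring]
    exact coeff_single1_X_mul _ _ _ (by decide)
  · rw [mul_assoc]
    exact coeff_single1_X_mul _ _ _ (by decide)
  · exact coeff_single1_X_mul _ _ _ (by decide)
  · rw [show (X 0 : MvPolynomial (Fin 3) (ZMod 2))^2 * wbar (2^t-2)
        = X 0 * (X 0 * wbar (2^t-2)) by ring]
    exact coeff_single1_X_mul _ _ _ (by decide)
  · exact coeff_single1_X_mul _ _ _ (by decide)
end
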